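/- arXiv:2105.09639 — 4 statements merged into one kernel-verified Lean document; each statement's English description precedes it below -/
import Mathlib

section
/- Let A, C \in Mult[[B]] and D \in Mult[[B]]_0 be multilinear function series. Then composition distributes over concatenation from the right: (A\centerdot C)\circ D = (A\circ D)\centerdot(C\circ D). -/
/-- A multilinear function series on `B`. -/
abbrev MSer (B : Type*) := ∀ n : ℕ, (Fin n → B) → B

/-- The predicate that each component of the series is a multilinear map. -/
def IsMultSeries {B : Type*} [Ring B] [Algebra ℂ B] (α : MSer B) : Prop :=
  ∀ n, ∃ F : MultilinearMap ℂ (fun _ : Fin n => B) B, α n = ⇑F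

/-- The concatenation product `∙` on multilinear function series. -/
def mulS {B : Type*} [Ring B] (α β : MSer B) : MSer B := fun n b =>
  ∑ k : Fin (n + 1),
    α k.1 (fun i => b ⟨i.1, by have := i.2; have := k.2; omega⟩) *
      β (n - k.1) (fun i => b ⟨k.1 + i.1, by have := i.2; have := k.2; omega⟩)

/-- The composition product `∘` on multilinear function series. -/
def compS {B : Type*} [Ring B] (α β : MSer B) : MSer B := fun n b =>
  ∑ c : Composition n,
    α c.length (fun i => β (c.blocksFun i) (fun j => b (c.embedding i j)))

section aux

lemma mser_congr {B : Type*} (α : MSer B) {k k' : ℕ} (h : k = k') {v : Fin k → B}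
    {v' : Fin k' → B} (hv : ∀ i : Fin k, v i = v' (Fin.cast h i)) : α k v = α k' v' := by
  subst h; exact congrArg _ (funext hv)

variable {n : ℕ}

lemma take_drop_sum (c : Composition n) (k : ℕ) :
    (c.blocks.take k).sum + (c.blocks.drop k).sum = n := by
  rw [← List.sum_append, List.take_append_drop, c.blocks_sum]

/-- Split a composition of `n` at position `k`. -/
def splitFwd (x : Σ c : Composition n, Fin (c.length + 1)) :
    Σ y : Σ m : Fin (n + 1), Composition m.1, Composition (n - y.1.1) :=
  ⟨⟨⟨(x.1.blocks.take x.2.1).sum, by have := take_drop_sum x.1 x.2.1; omega⟩,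
    ⟨x.1.blocks.take x.2.1, fun h => x.1.blocks_pos (List.take_subset _ _ h), rfl⟩⟩,
    ⟨x.1.blocks.drop x.2.1, fun h => x.1.blocks_pos (List.drop_subset _ _ h), by
      show (x.1.blocks.drop x.2.1).sum = n - (x.1.blocks.take x.2.1).sum
      have := take_drop_sum x.1 x.2.1; omega⟩⟩

/-- Concatenate two compositions. -/
def splitBwd (y : Σ y : Σ m : Fin (n + 1), Composition m.1, Composition (n - y.1.1)) :
    Σ c : Composition n, Fin (c.length + 1) :=
  ⟨⟨y.1.2.blocks ++ y.2.blocks, fun h => by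
      rcases List.mem_append.1 h with h | h
      exacts [y.1.2.blocks_pos h, y.2.blocks_pos h], by
      rw [List.sum_append, y.1.2.blocks_sum, y.2.blocks_sum]
      have := y.1.1.2; omega⟩,
    ⟨y.1.2.blocks.length, by
      simp only [Composition.length, List.length_append]; omega⟩⟩

lemma splitBwd_splitFwd (x : Σ c : Composition n, Fin (c.length + 1)) :
    splitBwd (splitFwd x) = x := by
  obtain ⟨c, k⟩ := x
  have hk : k.1 ≤ c.length := Nat.lt_succ_iff.1 k.2
  have hlen : c.blocks.length = c.length := rfl
  have hc : (splitBwd (splitFwd ⟨c, k⟩)).1 = c :=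
    Composition.ext (List.take_append_drop _ _)
  refine Sigma.ext hc ((Fin.heq_ext_iff (by rw [hc])).2 ?_)
  simp only [splitBwd, splitFwd, List.length_take]
  omega

lemma comp_heq {m m' : ℕ} (h : m' = m) {c : Composition m'} {c' : Composition m}
    (hb : c.blocks = c'.blocks) : HEq c c' := by
  subst h; exact heq_of_eq (Composition.ext hb)

lemma splitFwd_splitBwd (y : Σ y : Σ m : Fin (n + 1), Composition m.1, Composition (n - y.1.1)) :
    splitFwd (splitBwd y) = y := by
  obtain ⟨⟨m, c1⟩, c2⟩ := y
  have ht : (c1.blocks ++ c2.blocks).take c1.blocks.length = c1.blocks := List.take_left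
  have hd : (c1.blocks ++ c2.blocks).drop c1.blocks.length = c2.blocks := List.drop_left
  have hm : ((c1.blocks ++ c2.blocks).take c1.blocks.length).sum = m.1 := by
    rw [ht, c1.blocks_sum]
  have h1 : (splitFwd (splitBwd ⟨⟨m, c1⟩, c2⟩)).1 = ⟨m, c1⟩ :=
    Sigma.ext (Fin.ext hm) (comp_heq hm (by simpa [splitFwd, splitBwd] using ht))
  refine Sigma.ext h1 (comp_heq (by rw [h1]) ?_)
  simpa [splitFwd, splitBwd] using hd

end aux

/-- Composition distributes over concatenation from the right:
`(A ∙ C) ∘ D = (A ∘ D) ∙ (C ∘ D)` for `D` with vanishing constant term. -/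
theorem compS_right_distrib (B : Type*) [Ring B] [Algebra ℂ B]
    (A C D : MSer B) (hA : IsMultSeries A) (hC : IsMultSeries C) (hD : IsMultSeries D)
    (hD0 : D 0 = 0) :
    compS (mulS A C) D = mulS (compS A D) (compS C D) := by
  funext n b
  simp only [compS, mulS]
  rw [Finset.sum_sigma']
  conv_rhs => simp only [Fintype.sum_mul_sum]
  conv_rhs => rw [Finset.sum_sigma', Finset.sum_sigma']
  refine Finset.sum_nbij' splitFwd splitBwd (by simp) (by simp)
    (fun x _ => splitBwd_splitFwd x) (fun y _ => splitFwd_splitBwd y) (fun x _ => ?_)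
  obtain ⟨c, k⟩ := x
  have hk : k.1 ≤ c.length := Nat.lt_succ_iff.1 k.2
  have hlen : c.blocks.length = c.length := rfl
  refine congrArg₂ (· * ·) ?_ ?_
  · refine mser_congr A (k := k.1) (h := by
      simp only [splitFwd, Composition.length, List.length_take]; omega) (fun i => ?_)
    refine mser_congr D (h := by
      simp [splitFwd, Composition.blocksFun, List.getElem_take]; rfl) (fun j => ?_)
    refine congrArg b (Fin.ext ?_)
    have hik : min i.1 k.1 = i.1 := Nat.min_eq_left (Nat.le_of_lt i.2)
    simp only [splitFwd, Composition.coe_embedding, Composition.sizeUpTo, Fin.coe_cast,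
      List.take_take, hik]
    refine Eq.trans ?_ (Composition.coe_embedding _ _ _).symm
    simp [Composition.sizeUpTo, List.take_take, hik]
    show _ = (List.take (min i.1 k.1) c.blocks).sum + j.1
    rw [hik]
  · refine mser_congr C (h := by
      simp only [splitFwd, Composition.length, List.length_drop]) (fun i => ?_)
    refine mser_congr D (h := by
      simp [splitFwd, Composition.blocksFun, List.getElem_drop]; rfl) (fun j => ?_)
    refine congrArg b (Fin.ext ?_)
    simp only [splitFwd, Composition.coe_embedding, Composition.sizeUpTo, Fin.coe_cast]
    refine Eq.trans ?_ (congrArg _ (Composition.coe_embedding _ _ _).symm)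
    simp only [Composition.sizeUpTo, Fin.coe_cast]
    rw [List.take_add, List.sum_append, Nat.add_assoc]
    rfl
end

section
/- Let A \in Mult[[B]] be a multilinear function series with A_0 = 1_B (so A is invertible for the concatenation product \centerdot) and D \in Mult[[B]]_0. Then (A\circ D)^{-1} = A^{-1}\circ D, i.e., composition with D commutes with taking concatenation inverses. -/
/-- The unit `1 = (1_B, 0, 0, …)` for the concatenation product. -/
def oneS {B : Type*} [Ring B] : MSer B := fun n _ => if n = 0 then 1 else 0

section Aux
variable {B : Type*} [Ring B]

lemma apply_congr (D : MSer B) {m m' : ℕ} (h : m = m') {v : Fin m → B} {v' : Fin m' → B}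
    (hv : ∀ t : Fin m', v ⟨t.1, h ▸ t.2⟩ = v' t) : D m v = D m' v' := by
  subst h; exact congrArg (D m) (funext fun t => hv t)

lemma sum_sigma_eq {ι : Type*} [Fintype ι] {κ : ι → Type*} [∀ i, Fintype (κ i)]
    {M : Type*} [AddCommMonoid M] (f : ∀ i, κ i → M) :
    ∑ i, ∑ j, f i j = ∑ x : Σ i, κ i, f x.1 x.2 :=
  by rw [← Finset.univ_sigma_univ, Finset.sum_sigma]

def cApp {n : ℕ} (x : Σ k : Fin (n + 1), Composition k.1) (c2 : Composition (n - x.1.1)) :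
    Composition n where
  blocks := x.2.blocks ++ c2.blocks
  blocks_pos hi := by
    rcases List.mem_append.1 hi with h | h
    exacts [x.2.blocks_pos h, c2.blocks_pos h]
  blocks_sum := by
    have h1 := x.2.blocks_sum; have h2 := c2.blocks_sum
    have := x.1.2
    rw [List.sum_append, h1, h2]; omega

def Phi {n : ℕ} (y : Σ x : Σ k : Fin (n + 1), Composition k.1, Composition (n - x.1.1)) :
    Σ c : Composition n, Fin (c.length + 1) :=
  ⟨cApp y.1 y.2, ⟨y.1.2.length, by
    have : (cApp y.1 y.2).length = y.1.2.length + y.2.length := List.length_append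
    omega⟩⟩

lemma Phi_bij {n : ℕ} : Function.Bijective (Phi (n := n)) := by
  constructor
  · rintro ⟨⟨⟨k, hk⟩, c1⟩, c2⟩ ⟨⟨⟨k', hk'⟩, c1'⟩, c2'⟩ h
    obtain ⟨h1, h2⟩ := Sigma.ext_iff.1 h
    have hb : c1.blocks ++ c2.blocks = c1'.blocks ++ c2'.blocks := congrArg Composition.blocks h1
    have hlen : c1.length = c1'.length := by
      have := (Fin.heq_ext_iff (by rw [h1])).1 h2
      simpa [Phi] using this
    obtain ⟨hb1, hb2⟩ := List.append_inj hb hlen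
    have hkk : k = k' := by
      have e1 : c1.blocks.sum = k := c1.blocks_sum
      have e2 : c1'.blocks.sum = k' := c1'.blocks_sum
      rw [hb1] at e1; omega
    subst hkk
    have hc1 : c1 = c1' := by ext1; exact hb1
    subst hc1
    have hn : n - k = n - k := rfl
    have hc2 : c2 = c2' := by ext1; exact hb2
    subst hc2
    rfl
  · rintro ⟨c, j⟩
    have hj : j.1 ≤ c.blocks.length := Nat.lt_succ_iff.1 j.2
    have hsum : (c.blocks.take j.1).sum + (c.blocks.drop j.1).sum = n := by
      rw [← List.sum_append, List.take_append_drop, c.blocks_sum]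
    refine ⟨⟨⟨⟨(c.blocks.take j.1).sum, by omega⟩,
      ⟨c.blocks.take j.1, fun hi => c.blocks_pos (List.mem_of_mem_take hi), rfl⟩⟩,
      ⟨c.blocks.drop j.1, fun hi => c.blocks_pos (List.mem_of_mem_drop hi), by simp; omega⟩⟩, ?_⟩
    have hcblocks : (c.blocks.take j.1) ++ (c.blocks.drop j.1) = c.blocks :=
      List.take_append_drop _ _
    refine Sigma.ext ?_ ?_
    · ext1; exact hcblocks
    · refine (Fin.heq_ext_iff ?_).2 ?_
      · simp [Phi, cApp, Composition.length, hcblocks]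
      · simpa [Phi, Composition.length] using min_eq_left hj

lemma sum_reindex {M : Type*} [AddCommMonoid M] {n : ℕ}
    {f : ∀ k : Fin (n + 1), Composition k.1 → Composition (n - k.1) → M}
    {g : ∀ c : Composition n, Fin (c.length + 1) → M}
    (h : ∀ y : Σ x : Σ k : Fin (n + 1), Composition k.1, Composition (n - x.1.1),
      f y.1.1 y.1.2 y.2 = g (Phi y).1 (Phi y).2) :
    ∑ k, ∑ c1, ∑ c2, f k c1 c2 = ∑ c, ∑ j, g c j := by
  have e1 : ∑ y : Σ x : Σ k : Fin (n + 1), Composition k.1, Composition (n - x.1.1),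
      f y.1.1 y.1.2 y.2 = ∑ x : Σ c : Composition n, Fin (c.length + 1), g x.1 x.2 :=
    Fintype.sum_bijective Phi Phi_bij _ _ h
  rw [← Finset.univ_sigma_univ, Finset.sum_sigma, ← Finset.univ_sigma_univ, Finset.sum_sigma,
    ← Finset.univ_sigma_univ, Finset.sum_sigma] at e1
  exact e1

lemma compS_mulS (α β D : MSer B) :
    mulS (compS α D) (compS β D) = compS (mulS α β) D := by
  funext n b
  simp only [mulS, compS, Finset.sum_mul_sum]
  refine sum_reindex ?_
  rintro ⟨⟨⟨k, hk⟩, c1⟩, c2⟩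
  simp only [Phi]
  set cA := cApp ⟨⟨k, hk⟩, c1⟩ c2 with hcA
  have hblocks : cA.blocks = c1.blocks ++ c2.blocks := rfl
  have hl1 : c1.blocks.length = c1.length := rfl
  have hl2 : c2.blocks.length = c2.length := rfl
  have hAlen : cA.length = c1.length + c2.length := by
    show cA.blocks.length = _
    rw [hblocks, List.length_append, hl1, hl2]
  have hsz1 : ∀ i : ℕ, i ≤ c1.length → cA.sizeUpTo i = c1.sizeUpTo i := by
    intro i hi
    simp only [Composition.sizeUpTo, hblocks]
    rw [List.take_append_of_le_length (by omega)]
  have hsz2 : ∀ i : ℕ, cA.sizeUpTo (c1.length + i) = k + c2.sizeUpTo i := by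
    intro i
    simp only [Composition.sizeUpTo, hblocks]
    rw [show c1.length + i = c1.blocks.length + i by omega, List.take_length_add_append, List.sum_append,
      c1.blocks_sum]
  refine congrArg₂ (· * ·) ?_ ?_
  · refine apply_congr α rfl ?_
    intro t
    beta_reduce
    refine apply_congr D ?_ ?_
    · show c1.blocks[t.1]'(by omega) = (c1.blocks ++ c2.blocks)[t.1]'(by simp; omega)
      exact (List.getElem_append_left (by omega)).symm
    · intro l
      beta_reduce
      congr 1
      apply Fin.ext
      simp only [Composition.coe_embedding]
      show c1.sizeUpTo t.1 + l.1 = cA.sizeUpTo t.1 + l.1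
      rw [hsz1 t.1 (by omega)]
  · have hlen2 : c2.length = cA.length - c1.length := by omega
    refine apply_congr β hlen2 ?_
    intro t
    beta_reduce
    have ht : t.1 < c2.length := by have := t.2; omega
    refine apply_congr D ?_ ?_
    · show c2.blocks[t.1]'(by omega) = (c1.blocks ++ c2.blocks)[c1.length + t.1]'(by simp; omega)
      rw [List.getElem_append_right (by omega)]
      congr 1
      omega
    · intro l
      beta_reduce
      congr 1
      apply Fin.ext
      simp only [Composition.coe_embedding]
      show k + (c2.sizeUpTo t.1 + l.1) = cA.sizeUpTo (c1.length + t.1) + l.1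
      rw [hsz2 t.1]
      omega


lemma composition_zero_blocks (c : Composition 0) : c.blocks = [] := by
  cases hc : c.blocks with
  | nil => rfl
  | cons a l =>
    exfalso
    have hpos := c.blocks_pos (hc ▸ (List.mem_cons_self : a ∈ a :: l))
    have hs := c.blocks_sum
    rw [hc] at hs
    simp at hs
    omega

lemma compS_oneS (D : MSer B) : compS oneS D = oneS := by
  funext n b
  simp only [compS, oneS]
  cases n with
  | zero =>
    have huniq : ∀ c : Composition 0, c = Composition.ones 0 := by
      intro c
      ext1
      rw [composition_zero_blocks c, composition_zero_blocks (Composition.ones 0)]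
    haveI : Unique (Composition 0) := ⟨⟨Composition.ones 0⟩, huniq⟩
    rw [Fintype.sum_unique]
    simp [Composition.length, composition_zero_blocks]
  | succ m =>
    rw [if_neg (Nat.succ_ne_zero m)]
    refine Finset.sum_eq_zero fun c _ => ?_
    rw [if_neg]
    have := Composition.length_pos_of_pos c (Nat.succ_pos m)
    omega

end Aux

/-- If `A` has constant term `1_B` with concatenation inverse `A⁻¹`, and `D` has vanishing
constant term, then `(A ∘ D)⁻¹ = A⁻¹ ∘ D`: composing with `D` commutes with taking
concatenation inverses. -/
theorem compS_inv (B : Type*) [Ring B] [Algebra ℂ B]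
    (A Ainv D : MSer B) (hA : IsMultSeries A) (hAinv : IsMultSeries Ainv)
    (hD : IsMultSeries D)
    (hA0 : A 0 = fun _ => 1)
    (hinv : mulS A Ainv = oneS ∧ mulS Ainv A = oneS)
    (hD0 : D 0 = 0) :
    mulS (compS A D) (compS Ainv D) = oneS ∧ mulS (compS Ainv D) (compS A D) = oneS := by
  obtain ⟨h1, h2⟩ := hinv
  refine ⟨?_, ?_⟩
  · rw [compS_mulS, h1, compS_oneS]
  · rw [compS_mulS, h2, compS_oneS]
end

section
/- For a non-crossing linked partition \pi, the relation \Leftarrow defined as the transitive-reflexive closure of the union of the nesting relation (W \leftarrow V iff V \subset Conv(W) and V \cap W = \emptyset) and the linking relation (W \leftsquigarrow V iff min(V) = min(W) and V \subset Conv(W), or min(V) \in W and min(V) \ne min(W)) is a partial order on the blocks of \pi (antisymmetry holds). -/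
/-- `IsNCL n π`: `π` is a non-crossing linked partition of `[1,n]`: a collection of nonempty
blocks covering `[1,n]`, pairwise non-crossing, and such that two distinct blocks of size
`> 1` intersect in at most one point, which is the minimum of one of them. -/
def IsNCL (n : ℕ) (π : Finset (Finset ℕ)) : Prop :=
  (∀ V ∈ π, V.Nonempty ∧ V ⊆ Finset.Icc 1 n) ∧
  (∀ i ∈ Finset.Icc 1 n, ∃ V ∈ π, i ∈ V) ∧
  (∀ V ∈ π, ∀ W ∈ π, ∀ a ∈ V, ∀ b ∈ V, ∀ c ∈ W, ∀ d ∈ W,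
      a < c → c < b → b < d → V = W) ∧
  (∀ V ∈ π, ∀ W ∈ π, V ≠ W → 1 < V.card → 1 < W.card → (V ∩ W).Nonempty →
      ∃ x, V ∩ W = {x} ∧ ((∀ y ∈ V, x ≤ y) ∨ (∀ y ∈ W, x ≤ y)))


/-- The minimum of a block (junk value `0` for the empty block). -/
noncomputable def nclMin (V : Finset ℕ) : ℕ := sInf {x : ℕ | x ∈ V}

/-- The convex hull (integer interval spanned) of a block. -/
noncomputable def nclConv (W : Finset ℕ) : Finset ℕ := Finset.Icc (nclMin W) (W.sup id)

/-- The nesting relation `W ← V`: `V` is contained in the convex hull of `W` and disjoint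
from `W`. -/
noncomputable def nclNest (W V : Finset ℕ) : Prop := V ⊆ nclConv W ∧ V ∩ W = ∅

/-- The linking relation `W ↜ V`: either `min V = min W` and `V ⊆ Conv(W)`, or
`min V ∈ W` and `min V ≠ min W`. -/
def nclLink (W V : Finset ℕ) : Prop :=
  (nclMin V = nclMin W ∧ V ⊆ nclConv W) ∨ (nclMin V ∈ W ∧ nclMin V ≠ nclMin W)

/-- One step of the nesting-or-linking relation among blocks of `π`. -/
def nclStep (π : Finset (Finset ℕ)) (V W : Finset ℕ) : Prop :=
  V ∈ π ∧ W ∈ π ∧ (nclNest V W ∨ nclLink V W)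


lemma nclSup_mem {V : Finset ℕ} (h : V.Nonempty) : V.sup id ∈ V := by
  have := V.max'_mem h
  rwa [Finset.max'_eq_sup', Finset.sup'_eq_sup] at this

lemma nclMin_mem {V : Finset ℕ} (h : V.Nonempty) : nclMin V ∈ V :=
  Nat.sInf_mem h

lemma nclMin_le {V : Finset ℕ} {y : ℕ} (h : y ∈ V) : nclMin V ≤ y :=
  Nat.sInf_le h

/-- Key step lemma: a nontrivial step strictly increases `(min, -max)` lexicographically. -/
lemma nclStep_key {n : ℕ} {π : Finset (Finset ℕ)} (hπ : IsNCL n π) {V W : Finset ℕ}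
    (h : nclStep π V W) :
    V = W ∨ nclMin V < nclMin W ∨ (nclMin V = nclMin W ∧ W.sup id < V.sup id) := by
  obtain ⟨hV, hW, hrel⟩ := h
  have hVne : V.Nonempty := (hπ.1 V hV).1
  have hWne : W.Nonempty := (hπ.1 W hW).1
  rcases hrel with ⟨hsub, hdisj⟩ | ⟨hmin, hsub⟩ | ⟨hmem, hne⟩
  · -- nesting: W ⊆ Conv V, W ∩ V = ∅
    have h1 : nclMin W ∈ nclConv V := hsub (nclMin_mem hWne)
    have h2 : nclMin V ≤ nclMin W := (Finset.mem_Icc.mp h1).1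
    rcases eq_or_lt_of_le h2 with heq | hlt
    · exfalso
      have : nclMin W ∈ W ∩ V := Finset.mem_inter.mpr ⟨nclMin_mem hWne, heq ▸ nclMin_mem hVne⟩
      simp [hdisj] at this
    · exact Or.inr (Or.inl hlt)
  · -- linking, case 1: min W = min V, W ⊆ Conv V
    have hsupW : W.sup id ∈ W := nclSup_mem hWne
    have h1 : W.sup id ∈ nclConv V := hsub hsupW
    have h2 : W.sup id ≤ V.sup id := (Finset.mem_Icc.mp h1).2
    rcases eq_or_lt_of_le h2 with heq | hlt
    · -- min and max coincide; show V = W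
      left
      set m := nclMin V with hm
      set M := V.sup id with hM
      have hmV : m ∈ V := nclMin_mem hVne
      have hMV : M ∈ V := nclSup_mem hVne
      have hmW : m ∈ W := hmin ▸ nclMin_mem hWne
      have hMW : M ∈ W := heq ▸ hsupW
      rcases eq_or_lt_of_le (Finset.le_sup (f := id) hmV) with hmM | hmM
      · -- m = M : both are the singleton {m}
        have hVs : V = {m} := by
          apply Finset.eq_singleton_iff_unique_mem.mpr
          refine ⟨hmV, fun y hy => le_antisymm ?_ (nclMin_le hy)⟩
          calc y ≤ M := Finset.le_sup (f := id) hy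
          _ = m := hmM.symm
        have hWs : W = {m} := by
          apply Finset.eq_singleton_iff_unique_mem.mpr
          refine ⟨hmW, fun y hy => le_antisymm ?_ ?_⟩
          · calc y ≤ W.sup id := Finset.le_sup (f := id) hy
            _ = M := heq
            _ = m := hmM.symm
          · exact hmin ▸ nclMin_le hy
        rw [hVs, hWs]
      · -- m < M : if V ≠ W, the intersection {m, M} contradicts the singleton condition
        by_contra hVW
        have hcardV : 1 < V.card :=
          Finset.one_lt_card.mpr ⟨m, hmV, M, hMV, ne_of_lt hmM⟩
        have hcardW : 1 < W.card :=
          Finset.one_lt_card.mpr ⟨m, hmW, M, hMW, ne_of_lt hmM⟩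
        obtain ⟨x, hx, -⟩ := hπ.2.2.2 V hV W hW hVW hcardV hcardW
          ⟨m, Finset.mem_inter.mpr ⟨hmV, hmW⟩⟩
        have hmx : m = x := by
          have : m ∈ ({x} : Finset ℕ) := hx ▸ Finset.mem_inter.mpr ⟨hmV, hmW⟩
          simpa using this
        have hMx : M = x := by
          have : M ∈ ({x} : Finset ℕ) := hx ▸ Finset.mem_inter.mpr ⟨hMV, hMW⟩
          simpa using this
        exact absurd (hmx ▸ hMx) (ne_of_gt hmM)
    · exact Or.inr (Or.inr ⟨hmin.symm, hlt⟩)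
  · -- linking, case 2: min W ∈ V, min W ≠ min V
    exact Or.inr (Or.inl (lt_of_le_of_ne (nclMin_le hmem) (Ne.symm hne)))

/-- For a non-crossing linked partition `π`, the nesting-or-linking relation `⇐`, the
reflexive-transitive closure of the union of the nesting and linking relations on the blocks
of `π`, is antisymmetric — hence a partial order on the blocks of `π`. -/
theorem nclOrder_antisymm (n : ℕ) (π : Finset (Finset ℕ)) (hπ : IsNCL n π) :
    ∀ V ∈ π, ∀ W ∈ π,
      Relation.ReflTransGen (nclStep π) V W → Relation.ReflTransGen (nclStep π) W V →
        V = W := by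
  intro V hV W hW hVW hWV
  have key : ∀ {A B : Finset ℕ}, Relation.ReflTransGen (nclStep π) A B →
      A = B ∨ nclMin A < nclMin B ∨ (nclMin A = nclMin B ∧ B.sup id < A.sup id) := by
    intro A B h
    induction h with
    | refl => exact Or.inl rfl
    | tail hab hbc ih =>
      rcases ih with rfl | h1
      · exact nclStep_key hπ hbc
      · rcases nclStep_key hπ hbc with rfl | h2
        · exact Or.inr h1
        · rcases h1 with h1 | ⟨h1, h1'⟩ <;> rcases h2 with h2 | ⟨h2, h2'⟩ <;>
            right <;> omega
  rcases key hVW with rfl | h1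
  · rfl
  · rcases key hWV with rfl | h2
    · rfl
    · exfalso
      rcases h1 with h1 | ⟨h1, h1'⟩ <;> rcases h2 with h2 | ⟨h2, h2'⟩ <;> omega
end

section
/- Let (\mathcal{P},\gamma,m) be an operad with multiplication, G the group of series g with g_1 = id under substitution \times, and G^{inv} the group of series with constant term 1 under the concatenation product \centerdot induced by m. Then the right action h \curvearrowleft g := h \times g of G on G^{inv} is multiplicative: (h \centerdot h')\curvearrowleft g = (h\curvearrowleft g)\centerdot(h'\curvearrowleft g), and (h\curvearrowleft g)^{-1} = h^{-1}\curvearrowleft g. -/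
/-- Transport along an equality of indices. -/
def castP {P : ℕ → Type} {a b : ℕ} (h : a = b) (p : P a) : P b := h ▸ p

/-- The data of a total operadic composition on the collection `P`:
`γ(p; q₁,…,q_k) ∈ P(n₁+⋯+n_k)` for `p ∈ P(k)`, `qᵢ ∈ P(nᵢ)`. -/
abbrev OpGamma (P : ℕ → Type) :=
  ∀ {k : ℕ} (ns : Fin k → ℕ), P k → (∀ i, P (ns i)) → P (∑ i, ns i)

/-- The canonical order-preserving identification `(i, j) ↦ n₁ + ⋯ + n_{i-1} + j` of
`Σ i, Fin (ns i)` with `Fin (∑ i, ns i)`. -/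
def finSigmaMk {k : ℕ} (ns : Fin k → ℕ) (i : Fin k) (j : Fin (ns i)) : Fin (∑ l, ns l) :=
  ⟨(∑ l ∈ Finset.univ.filter (fun l => l < i), ns l) + j.1, by
    have h1 := Finset.sum_filter_add_sum_filter_not (Finset.univ : Finset (Fin k))
      (fun l => l < i) ns
    have h2 : ns i ≤ ∑ l ∈ Finset.univ.filter (fun l => ¬ l < i), ns l :=
      Finset.single_le_sum (f := ns) (fun _ _ => Nat.zero_le _) (by simp)
    have h3 := j.2
    omega⟩

/-- The pair `(a, b)` as a function on `Fin 2`. -/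
def pairFun (a b : ℕ) : Fin 2 → ℕ := fun i => if i.1 = 0 then a else b

/-- A pair of operators as inputs for an arity-2 operator. -/
def pairP {P : ℕ → Type} {a b : ℕ} (p : P a) (q : P b) : ∀ i : Fin 2, P (pairFun a b i) :=
  fun i =>
    if h : i.1 = 0 then castP (by simp [pairFun, h]) p else castP (by simp [pairFun, h]) q

/-- `(P, γ, id, m)` is an operad with multiplication: `γ` is associative, unital,
multilinear, `P(1) = ℂ·id`, and the distinguished arity-2 element `m` satisfies
`m ∘₁ m = m ∘₂ m`. -/
structure IsOperadMul {P : ℕ → Type} [∀ n, AddCommGroup (P n)] [∀ n, Module ℂ (P n)]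
    (gamma : OpGamma P) (idP : P 1) (m : P 2) : Prop where
  assoc : ∀ {k : ℕ} (ns : Fin k → ℕ) (p : P k) (qs : ∀ i, P (ns i))
      (ms : Fin (∑ i, ns i) → ℕ) (rs : ∀ l, P (ms l)),
      HEq (gamma ms (gamma ns p qs) rs)
        (gamma (fun i => ∑ j : Fin (ns i), ms (finSigmaMk ns i j)) p
          (fun i => gamma (fun j => ms (finSigmaMk ns i j)) (qs i)
            (fun j => rs (finSigmaMk ns i j))))
  unit_left : ∀ (n : ℕ) (q : P n), HEq (gamma (fun _ : Fin 1 => n) idP (fun _ => q)) q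
  unit_right : ∀ (k : ℕ) (p : P k), HEq (gamma (fun _ : Fin k => 1) p (fun _ => idP)) p
  add_left : ∀ {k : ℕ} (ns : Fin k → ℕ) (p p' : P k) (qs : ∀ i, P (ns i)),
      gamma ns (p + p') qs = gamma ns p qs + gamma ns p' qs
  smul_left : ∀ {k : ℕ} (ns : Fin k → ℕ) (c : ℂ) (p : P k) (qs : ∀ i, P (ns i)),
      gamma ns (c • p) qs = c • gamma ns p qs
  add_right : ∀ {k : ℕ} (ns : Fin k → ℕ) (p : P k) (qs : ∀ i, P (ns i)) (i : Fin k)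
      (q q' : P (ns i)),
      gamma ns p (Function.update qs i (q + q')) =
        gamma ns p (Function.update qs i q) + gamma ns p (Function.update qs i q')
  smul_right : ∀ {k : ℕ} (ns : Fin k → ℕ) (p : P k) (qs : ∀ i, P (ns i)) (i : Fin k)
      (c : ℂ) (q : P (ns i)),
      gamma ns p (Function.update qs i (c • q)) = c • gamma ns p (Function.update qs i q)
  one_dim : ∀ p : P 1, ∃ c : ℂ, p = c • idP
  mul_op : HEq (gamma (pairFun 2 1) m (pairP m idP)) (gamma (pairFun 1 2) m (pairP idP m))

/-- Series of operators, `ℂ[[𝒫]] = ∏ₙ P(n)` (only components `n ≥ 1` are relevant). -/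
abbrev Ser (P : ℕ → Type) := ∀ n, P n

/-- The substitution product `(x × y)_N = ∑_{k, n₁+⋯+n_k = N} γ(x_k; y_{n₁},…,y_{n_k})`,
i.e. the sum over all compositions of `N`.  For `h ∈ G^{inv} = 1 + ℂ[[𝒫]]` and `g ∈ G`
this is also the right action `h ↶ g := h × g` (the constant term passing through). -/
def timesS {P : ℕ → Type} [∀ n, AddCommGroup (P n)] (gamma : OpGamma P)
    (x y : Ser P) : Ser P := fun N =>
  if hN : N = 0 then 0 else
    ∑ c : Composition N,
      castP c.sum_blocksFun
        (gamma c.blocksFun (x c.length) (fun i => y (c.blocksFun i)))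

/-- The concatenation product of (tails of) series induced by the multiplication `m`:
`(x ∙ y)_N = ∑_{k+q=N, k,q ≥ 1} γ(m; x_k, y_q)`. -/
def cdotSS {P : ℕ → Type} [∀ n, AddCommGroup (P n)] (gamma : OpGamma P) (m : P 2)
    (x y : Ser P) : Ser P := fun N =>
  ∑ k ∈ (Finset.Ioo 0 N).attach,
    castP (show ∑ i, pairFun k.1 (N - k.1) i = N by
        have h := Finset.mem_Ioo.mp k.2
        simp only [pairFun, Fin.sum_univ_two, Fin.val_zero, Fin.val_one]
        simp only [if_true, if_neg one_ne_zero, reduceIte]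
        omega)
      (gamma (pairFun k.1 (N - k.1)) m (pairP (x k.1) (y (N - k.1))))

/-- The product of the group `G^{inv}` of series with constant term `1`, on tails:
`(1+x)(1+y) = 1 + (x + y + x∙y)`. -/
def gmul {P : ℕ → Type} [∀ n, AddCommGroup (P n)] (gamma : OpGamma P) (m : P 2)
    (x y : Ser P) : Ser P :=
  x + y + cdotSS gamma m x y

/-- The operad identity `I` viewed as a series. -/
def Iser {P : ℕ → Type} [∀ n, AddCommGroup (P n)] (idP : P 1) : Ser P := fun n =>
  if h : n = 1 then castP h.symm idP else 0

/-- Conjugation `h ↷ g = h ∙ g ∙ h⁻¹` on tails: given `h = 1 + x` with inverse `1 + y`,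
`(1+x) ∙ g ∙ (1+y) = g + x∙g + g∙y + x∙g∙y`. -/
def conjS {P : ℕ → Type} [∀ n, AddCommGroup (P n)] (gamma : OpGamma P) (m : P 2)
    (x g y : Ser P) : Ser P :=
  g + cdotSS gamma m x g + cdotSS gamma m g y + cdotSS gamma m (cdotSS gamma m x g) y

/-- Left translation `λ(h) = I ∙ h` of `G^{inv}` into `G`, on tails. -/
def lamS {P : ℕ → Type} [∀ n, AddCommGroup (P n)] (gamma : OpGamma P) (idP : P 1)
    (m : P 2) (x : Ser P) : Ser P :=
  Iser idP + cdotSS gamma m (Iser idP) x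

/-- Right translation `ρ(h) = h ∙ I` of `G^{inv}` into `G`, on tails. -/
def rhoS {P : ℕ → Type} [∀ n, AddCommGroup (P n)] (gamma : OpGamma P) (idP : P 1)
    (m : P 2) (x : Ser P) : Ser P :=
  Iser idP + cdotSS gamma m x (Iser idP)

set_option linter.unusedSectionVars false

section Helpers
variable {P : ℕ → Type} [∀ n, AddCommGroup (P n)]

theorem castP_heq {a b : ℕ} (h : a = b) (p : P a) : HEq (castP (P := P) h p) p := by
  subst h; rfl

theorem castP_add {a b : ℕ} (h : a = b) (p q : P a) :
    castP (P := P) h (p + q) = castP h p + castP h q := by subst h; rfl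

theorem castP_sum {a b : ℕ} (h : a = b) {ι : Type} (s : Finset ι) (f : ι → P a) :
    castP (P := P) h (∑ i ∈ s, f i) = ∑ i ∈ s, castP h (f i) := by subst h; rfl

theorem castP_zero {a b : ℕ} (h : a = b) : castP (P := P) h (0 : P a) = 0 := by subst h; rfl

theorem castP_eq_castP {a b N : ℕ} (h1 : a = N) (h2 : b = N) {p : P a} {q : P b}
    (h : HEq p q) : castP (P := P) h1 p = castP h2 q := by
  subst h1; subst h2; cases h; rfl

theorem ser_congr (f : ∀ n, P n) {n n' : ℕ} (h : n = n') : HEq (f n) (f n') := by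
  subst h; rfl

theorem gamma_congr (gamma : OpGamma P) {k k' : ℕ} (hk : k = k')
    {ns : Fin k → ℕ} {ns' : Fin k' → ℕ}
    (hns : ∀ i : Fin k, ns i = ns' (Fin.cast hk i))
    {p : P k} {p' : P k'} (hp : HEq p p')
    {qs : ∀ i, P (ns i)} {qs' : ∀ i, P (ns' i)}
    (hqs : ∀ i : Fin k, HEq (qs i) (qs' (Fin.cast hk i))) :
    HEq (gamma ns p qs) (gamma ns' p' qs') := by
  subst hk
  have hns' : ns = ns' := funext fun i => hns i
  subst hns'
  have hp' : p = p' := eq_of_heq hp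
  subst hp'
  have hqs' : qs = qs' := funext fun i => eq_of_heq (hqs i)
  subst hqs'
  rfl

example {a b : ℕ} (p : P a) (q : P b) : pairP p q 0 = p := rfl
example {a b : ℕ} (p : P a) (q : P b) : pairP p q 1 = q := rfl
example {a b : ℕ} (p : P a) (q : P b) (h : (0:ℕ) < 2) : pairP p q ⟨0, h⟩ = p := rfl
example {a b : ℕ} (p : P a) (q : P b) (h : (1:ℕ) < 2) : pairP p q ⟨1, h⟩ = q := rfl

theorem update_pairP_zero {a b : ℕ} (p p' : P a) (q : P b) :
    Function.update (pairP p q) 0 p' = pairP p' q := by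
  funext i
  rcases i with ⟨(_ | _ | iv), hi⟩
  · rw [show (⟨0, hi⟩ : Fin 2) = 0 from rfl]; exact Function.update_self (a := 0) (v := p') (f := pairP p q)
  · exact Function.update_of_ne (a := ⟨0 + 1, hi⟩) (a' := 0) (Fin.ne_of_val_ne (by simp)) p' (pairP p q)
  · omega

theorem update_pairP_one {a b : ℕ} (p : P a) (q q' : P b) :
    Function.update (pairP p q) 1 q' = pairP p q' := by
  funext i
  rcases i with ⟨(_ | _ | iv), hi⟩
  · exact Function.update_of_ne (a := ⟨0, hi⟩) (a' := 1) (Fin.ne_of_val_ne (by simp)) q' (pairP p q)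
  · rw [show (⟨1, hi⟩ : Fin 2) = 1 from rfl]; exact Function.update_self (a := 1) (v := q') (f := pairP p q)
  · omega



section Lin
variable {P : ℕ → Type} [∀ n, AddCommGroup (P n)] [∀ n, Module ℂ (P n)]
variable {gamma : OpGamma P} {idP : P 1} {m : P 2}

/-- `γ(·; qs)` as an additive monoid hom. -/
def gammaL (H : IsOperadMul gamma idP m) {k : ℕ} (ns : Fin k → ℕ) (qs : ∀ i, P (ns i)) : P k →+ P (∑ i, ns i) :=
  AddMonoidHom.mk' (fun p => gamma ns p qs) (fun p p' => H.add_left ns p p' qs)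

theorem gamma_sum_left (H : IsOperadMul gamma idP m) {k : ℕ} (ns : Fin k → ℕ) (qs : ∀ i, P (ns i)) {ι : Type}
    (s : Finset ι) (f : ι → P k) :
    gamma ns (∑ i ∈ s, f i) qs = ∑ i ∈ s, gamma ns (f i) qs :=
  map_sum (gammaL H ns qs) f s

theorem gamma_zero_left (H : IsOperadMul gamma idP m) {k : ℕ} (ns : Fin k → ℕ) (qs : ∀ i, P (ns i)) :
    gamma ns (0 : P k) qs = 0 :=
  map_zero (gammaL H ns qs)

theorem g2_add_left (H : IsOperadMul gamma idP m) {a b : ℕ} (p p' : P a) (q : P b) :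
    gamma (pairFun a b) m (pairP (p + p') q)
      = gamma (pairFun a b) m (pairP p q) + gamma (pairFun a b) m (pairP p' q) := by
  have h := H.add_right (pairFun a b) m (pairP p q) 0 p p'
  rw [update_pairP_zero, update_pairP_zero] at h
  exact (congrArg (gamma (pairFun a b) m) (update_pairP_zero p (p + p') q)).symm.trans h

theorem g2_add_right (H : IsOperadMul gamma idP m) {a b : ℕ} (p : P a) (q q' : P b) :
    gamma (pairFun a b) m (pairP p (q + q'))
      = gamma (pairFun a b) m (pairP p q) + gamma (pairFun a b) m (pairP p q') := by
  have h := H.add_right (pairFun a b) m (pairP p q) 1 q q'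
  rw [update_pairP_one, update_pairP_one] at h
  exact (congrArg (gamma (pairFun a b) m) (update_pairP_one p q (q + q'))).symm.trans h

/-- `γ(m; ·, q)` as an additive monoid hom. -/
def g2L (H : IsOperadMul gamma idP m) {a b : ℕ} (q : P b) : P a →+ P (∑ i, pairFun a b i) :=
  AddMonoidHom.mk' (fun p => gamma (pairFun a b) m (pairP p q))
    (fun p p' => g2_add_left H p p' q)

/-- `γ(m; p, ·)` as an additive monoid hom. -/
def g2R (H : IsOperadMul gamma idP m) {a b : ℕ} (p : P a) : P b →+ P (∑ i, pairFun a b i) :=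
  AddMonoidHom.mk' (fun q => gamma (pairFun a b) m (pairP p q))
    (fun q q' => g2_add_right H p q q')

theorem g2_sum_sum (H : IsOperadMul gamma idP m) {a b : ℕ} {ι κ : Type} (s : Finset ι) (t : Finset κ)
    (A : ι → P a) (B : κ → P b) :
    gamma (pairFun a b) m (pairP (∑ i ∈ s, A i) (∑ j ∈ t, B j))
      = ∑ i ∈ s, ∑ j ∈ t, gamma (pairFun a b) m (pairP (A i) (B j)) := by
  rw [show gamma (pairFun a b) m (pairP (∑ i ∈ s, A i) (∑ j ∈ t, B j))
      = g2L H (q := (∑ j ∈ t, B j)) (∑ i ∈ s, A i) from rfl, map_sum]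
  refine Finset.sum_congr rfl fun i _ => ?_
  exact map_sum (g2R H (p := A i)) B t

end Lin

section Comp

theorem sum_take_add_sum_drop' {N : ℕ} (c : Composition N) (a : ℕ) :
    (c.blocks.take a).sum + (c.blocks.drop a).sum = N := by
  rw [← List.sum_append, List.take_append_drop, c.blocks_sum]

/-- The composition given by the first `a` blocks. -/
def takeComp {N : ℕ} (c : Composition N) (a : ℕ) : Composition ((c.blocks.take a).sum) :=
  ⟨c.blocks.take a, fun hm => c.blocks_pos (List.take_subset a c.blocks hm), rfl⟩

/-- The composition given by the blocks after the first `a`. -/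
def dropComp {N : ℕ} (c : Composition N) (a : ℕ) :
    Composition (N - (c.blocks.take a).sum) :=
  ⟨c.blocks.drop a, fun hm => c.blocks_pos (List.drop_subset a c.blocks hm), by
    have := sum_take_add_sum_drop' c a; omega⟩

/-- Concatenation of compositions. -/
def joinComp {N p : ℕ} (hp : p ≤ N) (c₁ : Composition p) (c₂ : Composition (N - p)) :
    Composition N :=
  ⟨c₁.blocks ++ c₂.blocks, fun hm => by
      rcases List.mem_append.mp hm with h | h
      exacts [c₁.blocks_pos h, c₂.blocks_pos h], by
    rw [List.sum_append, c₁.blocks_sum, c₂.blocks_sum]; omega⟩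

theorem takeComp_length {N : ℕ} (c : Composition N) {a : ℕ} (ha : a ≤ c.length) :
    (takeComp c a).length = a := by
  simp only [takeComp, Composition.length, List.length_take]
  exact min_eq_left ha

theorem dropComp_length {N : ℕ} (c : Composition N) (a : ℕ) :
    (dropComp c a).length = c.length - a := by
  simp only [dropComp, Composition.length, List.length_drop]

theorem blocksFun_val_congr {N : ℕ} (c : Composition N) (i i' : Fin c.length)
    (h : i.1 = i'.1) : c.blocksFun i = c.blocksFun i' := congrArg _ (Fin.ext h)

theorem takeComp_blocksFun {N : ℕ} (c : Composition N) (a : ℕ)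
    (j : Fin (takeComp c a).length) (h : j.1 < c.length) :
    (takeComp c a).blocksFun j = c.blocksFun ⟨j.1, h⟩ := by
  simp only [Composition.blocksFun, takeComp, List.get_eq_getElem, List.getElem_take]
  exact List.getElem_take

theorem dropComp_blocksFun {N : ℕ} (c : Composition N) (a : ℕ)
    (j : Fin (dropComp c a).length) (h : a + j.1 < c.length) :
    (dropComp c a).blocksFun j = c.blocksFun ⟨a + j.1, h⟩ := by
  simp only [Composition.blocksFun, dropComp, List.get_eq_getElem]
  exact (List.getElem_drop' (xs := c.blocks) h).symm

theorem sum_take_pos {N : ℕ} (c : Composition N) {a : ℕ} (ha0 : 0 < a)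
    (ha : a ≤ c.length) : 0 < (c.blocks.take a).sum := by
  apply List.sum_pos
  · exact fun x hx => c.blocks_pos (List.take_subset a c.blocks hx)
  · intro hnil
    have := congrArg List.length hnil
    simp only [List.length_take, List.length_nil] at this
    have : c.blocks.length = c.length := rfl
    omega

theorem sum_drop_pos {N : ℕ} (c : Composition N) {a : ℕ} (ha : a < c.length) :
    0 < (c.blocks.drop a).sum := by
  apply List.sum_pos
  · exact fun x hx => c.blocks_pos (List.drop_subset a c.blocks hx)
  · intro hnil
    have := congrArg List.length hnil
    simp only [List.length_drop, List.length_nil] at this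
    have : c.blocks.length = c.length := rfl
    omega

theorem takeSum_mem {N : ℕ} (c : Composition N) {a : ℕ}
    (ha : a ∈ Finset.Ioo 0 c.length) :
    (c.blocks.take a).sum ∈ Finset.Ioo 0 N := by
  obtain ⟨h0, h1⟩ := Finset.mem_Ioo.mp ha
  have hs := sum_take_add_sum_drop' c a
  have hp := sum_take_pos c h0 h1.le
  have hd := sum_drop_pos c h1
  exact Finset.mem_Ioo.mpr ⟨hp, by omega⟩

end Comp

section FinSigma

theorem finSigmaMk_val_zero (ns : Fin 2 → ℕ) (i : Fin 2) (hi : i.1 = 0)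
    (j : Fin (ns i)) : (finSigmaMk ns i j).1 = j.1 := by
  have he : Finset.univ.filter (fun l => l < i) = (∅ : Finset (Fin 2)) := by
    apply Finset.filter_eq_empty_iff.mpr
    intro l _
    simp only [Fin.lt_def, hi]
    omega
  simp [finSigmaMk, he]

theorem finSigmaMk_val_one (ns : Fin 2 → ℕ) (i : Fin 2) (hi : i.1 = 1)
    (j : Fin (ns i)) : (finSigmaMk ns i j).1 = ns 0 + j.1 := by
  have he : Finset.univ.filter (fun l => l < i) = ({0} : Finset (Fin 2)) := by
    ext l
    simp only [Finset.mem_filter, Finset.mem_univ, true_and, Finset.mem_singleton,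
      Fin.lt_def, hi, Fin.ext_iff, Fin.val_zero]
    omega
  simp [finSigmaMk, he]

theorem finSum_congr {n n' : ℕ} (h : n = n') (f : Fin n → ℕ) (f' : Fin n' → ℕ)
    (hf : ∀ i : Fin n, f i = f' (Fin.cast h i)) : ∑ i, f i = ∑ i, f' i := by
  subst h; exact Finset.sum_congr rfl fun i _ => hf i

end FinSigma
section Key
variable {P : ℕ → Type} [∀ n, AddCommGroup (P n)] [∀ n, Module ℂ (P n)]
variable {gamma : OpGamma P} {idP : P 1} {m : P 2}

theorem key (H : IsOperadMul gamma idP m) (x y g : Ser P) {N : ℕ}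
    (c : Composition N) (a : ℕ) (ha : a ∈ Finset.Ioo 0 c.length)
    (h1 : ∑ i, pairFun a (c.length - a) i = c.length)
    (h2 : ∑ i, pairFun (c.blocks.take a).sum (N - (c.blocks.take a).sum) i = N) :
    castP c.sum_blocksFun
      (gamma c.blocksFun
        (castP h1 (gamma (pairFun a (c.length - a)) m (pairP (x a) (y (c.length - a)))))
        (fun i => g (c.blocksFun i)))
    = castP h2
        (gamma (pairFun (c.blocks.take a).sum (N - (c.blocks.take a).sum)) m
          (pairP
            (castP (takeComp c a).sum_blocksFun
              (gamma (takeComp c a).blocksFun (x (takeComp c a).length)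
                (fun i => g ((takeComp c a).blocksFun i))))
            (castP (dropComp c a).sum_blocksFun
              (gamma (dropComp c a).blocksFun (y (dropComp c a).length)
                (fun i => g ((dropComp c a).blocksFun i)))))) := by
  obtain ⟨ha0, ha1⟩ := Finset.mem_Ioo.mp ha
  set ns : Fin 2 → ℕ := pairFun a (c.length - a) with hns
  set ms : Fin (∑ i, ns i) → ℕ := fun l => c.blocksFun (Fin.cast h1 l) with hms
  have hTlen : (takeComp c a).length = a := takeComp_length c ha1.le
  have hDlen : (dropComp c a).length = c.length - a := dropComp_length c a
  -- pointwise identification of block sizes, left part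
  have hpt0 : ∀ (i : Fin 2) (hi : i.1 = 0) (j : Fin (ns i)),
      ms (finSigmaMk ns i j) = (takeComp c a).blocksFun (Fin.cast (by
        rw [hTlen]; simp only [hns, pairFun, hi]; rfl : ns i = (takeComp c a).length) j) := by
    intro i hi j
    have hj : j.1 < a := by
      have := j.2
      simp only [hns, pairFun, hi] at this
      simpa using this
    have hjc : j.1 < c.length := lt_trans hj ha1
    rw [takeComp_blocksFun c a _ (by simpa [hTlen] using hjc)]
    simp only [hms]
    apply blocksFun_val_congr
    simpa using finSigmaMk_val_zero ns i hi j
  -- pointwise identification of block sizes, right part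
  have hpt1 : ∀ (i : Fin 2) (hi : i.1 = 1) (j : Fin (ns i)),
      ms (finSigmaMk ns i j) = (dropComp c a).blocksFun (Fin.cast (by
        rw [hDlen]; simp only [hns, pairFun, hi]; rfl : ns i = (dropComp c a).length) j) := by
    intro i hi j
    have hj : j.1 < c.length - a := by
      have := j.2
      simp only [hns, pairFun, hi] at this
      simpa using this
    rw [dropComp_blocksFun c a _ (by omega)]
    simp only [hms]
    apply blocksFun_val_congr
    have := finSigmaMk_val_one ns i hi j
    simpa [hns, pairFun] using this
  apply castP_eq_castP
  refine HEq.trans (HEq.trans ?_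
      (H.assoc ns m (pairP (x a) (y (c.length - a))) ms (fun l => g (ms l)))) ?_
  · -- step 1
    apply gamma_congr gamma h1.symm
    · intro i
      simp only [hms]
      apply blocksFun_val_congr
      rfl
    · exact castP_heq h1 _
    · intro i
      exact ser_congr g (by apply blocksFun_val_congr; rfl)
  · -- step 3
    apply gamma_congr gamma rfl
    · rintro ⟨(_ | _ | iv), hiv⟩
      · -- block sizes: first slot
        show ∑ j : Fin (ns ⟨0, hiv⟩), ms (finSigmaMk ns ⟨0, hiv⟩ j)
            = (c.blocks.take a).sum
        rw [← (takeComp c a).sum_blocksFun]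
        exact finSum_congr (by rw [hTlen]; simp [hns, pairFun]) _ _
          (fun j => hpt0 ⟨0, hiv⟩ rfl j)
      · -- block sizes: second slot
        show ∑ j : Fin (ns ⟨1, hiv⟩), ms (finSigmaMk ns ⟨1, hiv⟩ j)
            = N - (c.blocks.take a).sum
        rw [← (dropComp c a).sum_blocksFun]
        exact finSum_congr (by rw [hDlen]; simp [hns, pairFun]) _ _
          (fun j => hpt1 ⟨1, hiv⟩ rfl j)
      · omega
    · exact HEq.rfl
    · rintro ⟨(_ | _ | iv), hiv⟩
      · -- inner operator: first slot
        refine HEq.trans ?_ (castP_heq (takeComp c a).sum_blocksFun _).symm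
        apply gamma_congr gamma (show ns ⟨0, hiv⟩ = (takeComp c a).length by
          rw [hTlen]; simp [hns, pairFun])
        · intro j
          exact hpt0 ⟨0, hiv⟩ rfl j
        · exact ser_congr x (by rw [hTlen])
        · intro j
          exact ser_congr g (hpt0 ⟨0, hiv⟩ rfl j)
      · -- inner operator: second slot
        refine HEq.trans ?_ (castP_heq (dropComp c a).sum_blocksFun _).symm
        apply gamma_congr gamma (show ns ⟨1, hiv⟩ = (dropComp c a).length by
          rw [hDlen]; simp [hns, pairFun])
        · intro j
          exact hpt1 ⟨1, hiv⟩ rfl j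
        · exact ser_congr y (by rw [hDlen])
        · intro j
          exact ser_congr g (hpt1 ⟨1, hiv⟩ rfl j)
      · omega

end Key
section Cross
variable {P : ℕ → Type} [∀ n, AddCommGroup (P n)] [∀ n, Module ℂ (P n)]
variable {gamma : OpGamma P} {idP : P 1} {m : P 2}

theorem joinComp_length {N p : ℕ} (hp : p ≤ N) (c₁ : Composition p)
    (c₂ : Composition (N - p)) :
    (joinComp hp c₁ c₂).length = c₁.length + c₂.length := by
  simp [joinComp, Composition.length]

theorem joinLen_mem {N p : ℕ} (hp : p ∈ Finset.Ioo 0 N) (c₁ : Composition p)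
    (c₂ : Composition (N - p)) :
    c₁.length ∈ Finset.Ioo 0 ((joinComp (Finset.mem_Ioo.mp hp).2.le c₁ c₂).length) := by
  obtain ⟨hp0, hp1⟩ := Finset.mem_Ioo.mp hp
  rw [joinComp_length]
  have h1 : 0 < c₁.length := c₁.length_pos_of_pos hp0
  have h2 : 0 < c₂.length := c₂.length_pos_of_pos (by omega)
  exact Finset.mem_Ioo.mpr ⟨h1, by omega⟩

theorem sub_heq {N : ℕ} {c c' : Composition N} (h : c = c')
    (a : {a // a ∈ Finset.Ioo 0 c.length}) (a' : {a // a ∈ Finset.Ioo 0 c'.length})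
    (hv : a.1 = a'.1) : HEq a a' := by
  subst h; exact heq_of_eq (Subtype.ext hv)

theorem prodcomp_heq {N p p' : ℕ} (h : p = p') (c₁ : Composition p) (c₁' : Composition p')
    (c₂ : Composition (N - p)) (c₂' : Composition (N - p'))
    (h1 : c₁.blocks = c₁'.blocks) (h2 : c₂.blocks = c₂'.blocks) :
    HEq (c₁, c₂) (c₁', c₂') := by
  subst h
  exact heq_of_eq (Prod.ext (Composition.ext h1) (Composition.ext h2))

theorem cross (H : IsOperadMul gamma idP m) (x y g : Ser P) (N : ℕ) (hN : N ≠ 0) :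
    ∑ c : Composition N, castP c.sum_blocksFun
        (gamma c.blocksFun (cdotSS gamma m x y c.length) (fun i => g (c.blocksFun i)))
      = cdotSS gamma m (timesS gamma x g) (timesS gamma y g) N := by
  -- Rewrite LHS as a sum over a sigma type
  have lhs_eq : ∑ c : Composition N, castP c.sum_blocksFun
        (gamma c.blocksFun (cdotSS gamma m x y c.length) (fun i => g (c.blocksFun i)))
      = ∑ z ∈ (Finset.univ : Finset (Composition N)).sigma
            (fun c => (Finset.Ioo 0 c.length).attach),
          castP z.1.sum_blocksFun
            (gamma z.1.blocksFun
              (castP (show ∑ i, pairFun z.2.1 (z.1.length - z.2.1) i = z.1.length by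
                  have h := Finset.mem_Ioo.mp z.2.2
                  simp only [pairFun, Fin.sum_univ_two, Fin.val_zero, Fin.val_one]
                  simp only [if_true, if_neg one_ne_zero, reduceIte]
                  omega)
                (gamma (pairFun z.2.1 (z.1.length - z.2.1)) m
                  (pairP (x z.2.1) (y (z.1.length - z.2.1)))))
              (fun i => g (z.1.blocksFun i))) := by
    rw [Finset.sum_sigma]
    refine Finset.sum_congr rfl fun c _ => ?_
    rw [show cdotSS gamma m x y c.length = ∑ k ∈ (Finset.Ioo 0 c.length).attach,
        castP (show ∑ i, pairFun k.1 (c.length - k.1) i = c.length by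
            have h := Finset.mem_Ioo.mp k.2
            simp only [pairFun, Fin.sum_univ_two, Fin.val_zero, Fin.val_one]
            simp only [if_true, if_neg one_ne_zero, reduceIte]
            omega)
          (gamma (pairFun k.1 (c.length - k.1)) m (pairP (x k.1) (y (c.length - k.1))))
      from rfl]
    rw [gamma_sum_left H, castP_sum]
  rw [lhs_eq]
  -- Rewrite RHS as a sum over a sigma type
  have rhs_eq : cdotSS gamma m (timesS gamma x g) (timesS gamma y g) N
      = ∑ w ∈ ((Finset.Ioo 0 N).attach).sigma
            (fun p => (Finset.univ : Finset (Composition p.1 × Composition (N - p.1)))),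
          castP (show ∑ i, pairFun w.1.1 (N - w.1.1) i = N by
              have h := Finset.mem_Ioo.mp w.1.2
              simp only [pairFun, Fin.sum_univ_two, Fin.val_zero, Fin.val_one]
              simp only [if_true, if_neg one_ne_zero, reduceIte]
              omega)
            (gamma (pairFun w.1.1 (N - w.1.1)) m
              (pairP
                (castP w.2.1.sum_blocksFun
                  (gamma w.2.1.blocksFun (x w.2.1.length) (fun i => g (w.2.1.blocksFun i))))
                (castP w.2.2.sum_blocksFun
                  (gamma w.2.2.blocksFun (y w.2.2.length)
                    (fun i => g (w.2.2.blocksFun i)))))) := by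
    rw [Finset.sum_sigma]
    refine Finset.sum_congr rfl fun p _ => ?_
    obtain ⟨hp0, hp1⟩ := Finset.mem_Ioo.mp p.2
    rw [show timesS gamma x g p.1 = ∑ c₁ : Composition p.1, castP c₁.sum_blocksFun
        (gamma c₁.blocksFun (x c₁.length) (fun i => g (c₁.blocksFun i)))
      from dif_neg (by omega)]
    rw [show timesS gamma y g (N - p.1) = ∑ c₂ : Composition (N - p.1),
        castP c₂.sum_blocksFun
          (gamma c₂.blocksFun (y c₂.length) (fun i => g (c₂.blocksFun i)))
      from dif_neg (by omega)]
    beta_reduce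
    rw [g2_sum_sum H, castP_sum]
    rw [Fintype.sum_prod_type]
    refine Finset.sum_congr rfl fun c₁ _ => ?_
    rw [castP_sum]
  rw [rhs_eq]
  -- The bijection
  refine Finset.sum_nbij'
    (fun z => ⟨⟨(z.1.blocks.take z.2.1).sum, takeSum_mem z.1 z.2.2⟩,
      (takeComp z.1 z.2.1, dropComp z.1 z.2.1)⟩)
    (fun w => ⟨joinComp (Finset.mem_Ioo.mp w.1.2).2.le w.2.1 w.2.2,
      ⟨w.2.1.length, joinLen_mem w.1.2 w.2.1 w.2.2⟩⟩)
    (fun z _ => Finset.mem_sigma.mpr ⟨Finset.mem_attach _ _, Finset.mem_univ _⟩)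
    (fun w _ => Finset.mem_sigma.mpr ⟨Finset.mem_univ _, Finset.mem_attach _ _⟩)
    ?_ ?_ ?_
  · -- left inverse
    rintro ⟨c, a, ha⟩ -
    have hblocks : (joinComp (Finset.mem_Ioo.mp (takeSum_mem c ha)).2.le
        (takeComp c a) (dropComp c a)).blocks = c.blocks := by
      simp only [joinComp, takeComp, dropComp]
      exact List.take_append_drop a c.blocks
    have hc : joinComp (Finset.mem_Ioo.mp (takeSum_mem c ha)).2.le
        (takeComp c a) (dropComp c a) = c := Composition.ext hblocks
    refine Sigma.ext hc (sub_heq hc _ _ ?_)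
    exact takeComp_length c (Finset.mem_Ioo.mp ha).2.le
  · -- right inverse
    rintro ⟨⟨p, hp⟩, c₁, c₂⟩ -
    have hlen : c₁.length = c₁.blocks.length := rfl
    have hjoin : (joinComp (Finset.mem_Ioo.mp hp).2.le c₁ c₂).blocks
        = c₁.blocks ++ c₂.blocks := rfl
    have htake : ((joinComp (Finset.mem_Ioo.mp hp).2.le c₁ c₂).blocks.take c₁.length)
        = c₁.blocks := by rw [hjoin, hlen, List.take_left]
    have hdrop : ((joinComp (Finset.mem_Ioo.mp hp).2.le c₁ c₂).blocks.drop c₁.length)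
        = c₂.blocks := by rw [hjoin, hlen, List.drop_left]
    have hpsum : ((joinComp (Finset.mem_Ioo.mp hp).2.le c₁ c₂).blocks.take c₁.length).sum
        = p := by rw [htake, c₁.blocks_sum]
    refine Sigma.ext (Subtype.ext hpsum) ?_
    refine prodcomp_heq hpsum _ _ _ _ ?_ ?_
    · exact htake
    · exact hdrop
  · -- main term equality
    rintro ⟨c, a, ha⟩ -
    exact key H x y g c a ha _ _

end Cross
section Final
variable {P : ℕ → Type} [∀ n, AddCommGroup (P n)] [∀ n, Module ℂ (P n)]
variable {gamma : OpGamma P} {idP : P 1} {m : P 2}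

theorem timesS_zero (H : IsOperadMul gamma idP m) (g : Ser P) :
    timesS gamma (0 : Ser P) g = (0 : Ser P) := by
  funext N
  show (if hN : N = 0 then 0 else ∑ c : Composition N, castP c.sum_blocksFun
      (gamma c.blocksFun ((0 : Ser P) c.length) fun i => g (c.blocksFun i))) = 0
  split
  · rfl
  · apply Finset.sum_eq_zero
    intro c _
    show castP c.sum_blocksFun
        (gamma c.blocksFun (0 : P c.length) fun i => g (c.blocksFun i)) = 0
    rw [gamma_zero_left H, castP_zero]

theorem times_gmul (H : IsOperadMul gamma idP m) (x y g : Ser P) :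
    timesS gamma (gmul gamma m x y) g
      = gmul gamma m (timesS gamma x g) (timesS gamma y g) := by
  funext N
  by_cases hN : N = 0
  · subst hN
    show (0 : P 0) = timesS gamma x g 0 + timesS gamma y g 0
        + cdotSS gamma m (timesS gamma x g) (timesS gamma y g) 0
    rw [show timesS gamma x g 0 = 0 from rfl, show timesS gamma y g 0 = 0 from rfl]
    show (0 : P 0) = 0 + 0 + ∑ k ∈ (Finset.Ioo 0 0).attach, _
    rw [Finset.sum_eq_zero fun k _ => absurd k.2 (by simp only [Finset.mem_Ioo]; omega)]
    simp
  · show (if h : N = 0 then 0 else ∑ c : Composition N, castP c.sum_blocksFun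
        (gamma c.blocksFun ((gmul gamma m x y) c.length) fun i => g (c.blocksFun i)))
      = timesS gamma x g N + timesS gamma y g N
        + cdotSS gamma m (timesS gamma x g) (timesS gamma y g) N
    rw [dif_neg hN]
    rw [show timesS gamma x g N = ∑ c : Composition N, castP c.sum_blocksFun
        (gamma c.blocksFun (x c.length) fun i => g (c.blocksFun i)) from dif_neg hN]
    rw [show timesS gamma y g N = ∑ c : Composition N, castP c.sum_blocksFun
        (gamma c.blocksFun (y c.length) fun i => g (c.blocksFun i)) from dif_neg hN]
    rw [← cross H x y g N hN]
    rw [← Finset.sum_add_distrib, ← Finset.sum_add_distrib]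
    refine Finset.sum_congr rfl fun c _ => ?_
    show castP c.sum_blocksFun
        (gamma c.blocksFun
          (x c.length + y c.length + cdotSS gamma m x y c.length)
          fun i => g (c.blocksFun i)) = _
    rw [H.add_left, H.add_left, castP_add, castP_add]

end Final


/-- In an operad with multiplication, the right action `h ↶ g = h × g` of the group `G`
(series with linear term `id`, under substitution) on the group `G^{inv}` (series with
constant term `1`, under concatenation) is compatible with the concatenation product:
`(h ∙ h') ↶ g = (h ↶ g) ∙ (h' ↶ g)`, and `(h ↶ g)⁻¹ = h⁻¹ ↶ g`.  Elements of `G^{inv}`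
are represented by their tails `x` (so `h = 1 + x`), inverses being witnessed explicitly. -/
theorem act_mult (P : ℕ → Type) [∀ n, AddCommGroup (P n)] [∀ n, Module ℂ (P n)]
    (gamma : OpGamma P) (idP : P 1) (m : P 2) (H : IsOperadMul gamma idP m)
    (x y xinv g : Ser P)
    (hg : g 1 = idP)
    (hxinv : gmul gamma m x xinv = 0 ∧ gmul gamma m xinv x = 0) :
    timesS gamma (gmul gamma m x y) g =
      gmul gamma m (timesS gamma x g) (timesS gamma y g) ∧
    gmul gamma m (timesS gamma x g) (timesS gamma xinv g) = 0 ∧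
    gmul gamma m (timesS gamma xinv g) (timesS gamma x g) = 0 := by
  refine ⟨times_gmul H x y g, ?_, ?_⟩
  · have h := times_gmul H x xinv g
    rw [hxinv.1, timesS_zero H] at h
    exact h.symm
  · have h := times_gmul H xinv x g
    rw [hxinv.2, timesS_zero H] at h
    exact h.symm
end Helpers
end
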